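/- Let q > 1 be real, λ = q − q^{−1}, and let α, β ∈ ℂ satisfy |α|² = q/λ and α β̄ = ᾱ β. Then for every complex-valued function f on ℝ∖{0} closed under x ↦ q^{±1}x and every real x ≠ 0, (a(a⁺ f))(x) − q^{−2} (a⁺(a f))(x) = f(x); i.e. the realized operators satisfy the q-oscillator relation a a⁺ − q^{−2} a⁺ a = 1. -/

import Mathlib

/-- The q-derivative `(D_q f)(x) = (f(qx) - f(q⁻¹x)) / (x(q - q⁻¹))`. -/
noncomputable def Dq (q : ℝ) (f : ℝ → ℂ) (x : ℝ) : ℂ :=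
  (f (q * x) - f (q⁻¹ * x)) / ((x : ℂ) * ((q : ℂ) - (q : ℂ)⁻¹))

/-- The annihilation operator `a = α U⁻² + β U⁻¹ P` of the q-oscillator realized
on the quantum line: `(a f)(x) = α q f(q²x) - i β q^{1/2} (D_q f)(qx)`. -/
noncomputable def aOp (q : ℝ) (α β : ℂ) (f : ℝ → ℂ) (x : ℝ) : ℂ :=
  α * (q : ℂ) * f (q ^ 2 * x) -
    Complex.I * β * ((q ^ ((1 : ℝ) / 2) : ℝ) : ℂ) * Dq q f (q * x)

/-- The creation operator `a⁺ = ᾱ U² + β̄ P U` of the q-oscillator realized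
on the quantum line: `(a⁺ f)(x) = ᾱ q⁻¹ f(q⁻²x) - i β̄ q^{-3/2} (D_q f)(q⁻¹x)`. -/
noncomputable def aPlusOp (q : ℝ) (α β : ℂ) (f : ℝ → ℂ) (x : ℝ) : ℂ :=
  (starRingEnd ℂ) α * (q : ℂ)⁻¹ * f (q⁻¹ ^ 2 * x) -
    Complex.I * (starRingEnd ℂ) β * ((q ^ (-(3 : ℝ) / 2) : ℝ) : ℂ) * Dq q f (q⁻¹ * x)

set_option maxHeartbeats 2000000 in
/-- The realized operators satisfy the q-oscillator relation `a a⁺ - q⁻² a⁺ a = 1`: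
for every complex-valued function `f` and every real `x ≠ 0`,
`(a(a⁺f))(x) - q⁻² (a⁺(a f))(x) = f(x)`. -/
theorem qOscillator_relation (q : ℝ) (hq : 1 < q) (α β : ℂ)
    (hα : ‖α‖ ^ 2 = q / (q - q⁻¹))
    (hαβ : α * (starRingEnd ℂ) β = (starRingEnd ℂ) α * β) :
    ∀ (f : ℝ → ℂ) (x : ℝ), x ≠ 0 →
      aOp q α β (aPlusOp q α β f) x - (q : ℂ) ^ (-2 : ℤ) * aPlusOp q α β (aOp q α β f) x
        = f x := by
  intro f x hx
  have hq0 : (0:ℝ) < q := zero_lt_one.trans hq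
  have hqne : q ≠ 0 := ne_of_gt hq0
  have hlamR : (0:ℝ) < q - q⁻¹ := by
    have h' : q⁻¹ < 1 := inv_lt_one_of_one_lt₀ hq
    linarith
  have hsR : q ^ ((1:ℝ)/2) * q ^ ((1:ℝ)/2) = q := by
    rw [← Real.rpow_add hq0]; norm_num
  have htR : q ^ (-(3:ℝ) / 2) = q ^ ((1:ℝ)/2) * q⁻¹ * q⁻¹ := by
    rw [show (-(3:ℝ)/2) = (1:ℝ)/2 + (-1) + (-1) by norm_num, Real.rpow_add hq0,
      Real.rpow_add hq0, Real.rpow_neg_one]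
  simp only [aOp, aPlusOp, Dq, htR, pow_two, mul_assoc, inv_mul_cancel_left₀ hqne,
    mul_inv_cancel_left₀ hqne]
  push_cast
  generalize f (q * (q * x)) = B
  generalize f (q⁻¹ * (q⁻¹ * x)) = C
  generalize f x = A
  set S : ℂ := ((q ^ ((1:ℝ)/2) : ℝ) : ℂ) with hSdef
  have hSC : S * S = (q : ℂ) := by rw [hSdef]; exact_mod_cast congrArg (Complex.ofReal) hsR
  have hSne : S ≠ 0 := by
    rw [hSdef]
    exact_mod_cast ne_of_gt (Real.rpow_pos_of_pos hq0 _)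
  have hxC : (x:ℂ) ≠ 0 := Complex.ofReal_ne_zero.mpr hx
  have hqC : (q:ℂ) ≠ 0 := Complex.ofReal_ne_zero.mpr hqne
  have hαne : α ≠ 0 := by
    have hpos : (0:ℝ) < ‖α‖ ^ 2 := by rw [hα]; exact div_pos hq0 hlamR
    intro h; rw [h] at hpos; simp at hpos
  have hlamC : (q:ℂ) - (↑q)⁻¹ ≠ 0 := by
    have : ((q - q⁻¹ : ℝ) : ℂ) ≠ 0 := Complex.ofReal_ne_zero.mpr (ne_of_gt hlamR)
    push_cast at this
    exact this
  have hq21 : (q:ℂ) * (q:ℂ) - 1 ≠ 0 := by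
    intro h
    apply hlamC
    field_simp
    linear_combination h
  have hq21R : q * q - 1 ≠ 0 := by nlinarith
  have h1' : α * (starRingEnd ℂ) α * ((q:ℂ) * (q:ℂ) - 1) = (q:ℂ) * (q:ℂ) := by
    have h0 : α * (starRingEnd ℂ) α = (↑(q * q / (q * q - 1)) : ℂ) := by
      rw [Complex.mul_conj, ← Complex.sq_norm, hα]
      congr 1
      rw [div_eq_div_iff (ne_of_gt hlamR) hq21R]
      field_simp
    rw [h0]
    push_cast
    rw [div_mul_cancel₀ _ hq21]
  have hγ : (starRingEnd ℂ) α = (q:ℂ) * (q:ℂ) * (((q:ℂ) * (q:ℂ) - 1) * α)⁻¹ := by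
    rw [← div_eq_mul_inv, eq_div_iff (mul_ne_zero hq21 hαne)]
    linear_combination h1'
  have hδ : (starRingEnd ℂ) β
      = (q:ℂ) * (q:ℂ) * β * (((q:ℂ) * (q:ℂ) - 1) * (α * α))⁻¹ := by
    have h2 := hαβ
    rw [hγ] at h2
    field_simp at h2
    rw [← div_eq_mul_inv, eq_div_iff (mul_ne_zero hq21 (mul_ne_zero hαne hαne))]
    rw [eq_div_iff (by rw [sq]; exact hq21)] at h2
    linear_combination h2
  have hlaminv : ((q:ℂ) - (↑q)⁻¹)⁻¹ = (q:ℂ) * ((q:ℂ) * (q:ℂ) - 1)⁻¹ := by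
    refine inv_eq_of_mul_eq_one_right ?_
    field_simp
    exact div_self (by rw [sq]; exact hq21)
  have hKM : (((q:ℂ) * (q:ℂ) - 1))⁻¹ * ((q:ℂ) * (q:ℂ) - 1) = 1 := inv_mul_cancel₀ hq21
  have hq2 : (q:ℂ) ^ (-2 : ℤ) = (↑q)⁻¹ * (↑q)⁻¹ := by
    rw [zpow_neg, zpow_two, mul_inv]
  have haa : α * α⁻¹ = 1 := mul_inv_cancel₀ hαne
  have hqq : (q:ℂ) * (↑q)⁻¹ = 1 := mul_inv_cancel₀ hqC
  have hII : Complex.I * Complex.I = -1 := Complex.I_mul_I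
  rw [hγ, hδ, hq2]
  simp only [div_eq_mul_inv, mul_inv, inv_inv, hlaminv]
  generalize hg : (((q:ℂ) * (q:ℂ) - 1))⁻¹ = K at hKM ⊢
  linear_combination ((q:ℂ)^3 * (q:ℂ)⁻¹ * K * A + (-1) * (q:ℂ)^3 * (q:ℂ)⁻¹^3 * K * A + (-1) * α⁻¹ * β * (q:ℂ)^4 * (q:ℂ)⁻¹^3 * (x:ℂ)⁻¹ * S * K^2 * Complex.I * B + α⁻¹ * β * (q:ℂ)^4 * (q:ℂ)⁻¹^3 * (x:ℂ)⁻¹ * S * K^2 * Complex.I * A + α⁻¹ * β * (q:ℂ)^5 * (q:ℂ)⁻¹^4 * (x:ℂ)⁻¹ * S * K^2 * Complex.I * B + (-1) * α⁻¹ * β * (q:ℂ)^5 * (q:ℂ)⁻¹^4 * (x:ℂ)⁻¹ * S * K^2 * Complex.I * A) * haa +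
    ((-1) * K * A + (-1) * (q:ℂ) * (q:ℂ)⁻¹ * K * A + (q:ℂ)^2 * K * A + (-1) * (q:ℂ)^2 * (q:ℂ)⁻¹^2 * K * A + (-1) * α⁻¹ * β * (q:ℂ)^3 * (q:ℂ)⁻¹^2 * (x:ℂ)⁻¹ * S * K^2 * Complex.I * C + α⁻¹ * β * (q:ℂ)^3 * (q:ℂ)⁻¹^2 * (x:ℂ)⁻¹ * S * K^2 * Complex.I * A + α⁻¹ * β * (q:ℂ)^4 * (q:ℂ)⁻¹^3 * (x:ℂ)⁻¹ * S * K^2 * Complex.I * B + (-1) * α⁻¹ * β * (q:ℂ)^4 * (q:ℂ)⁻¹^3 * (x:ℂ)⁻¹ * S * K^2 * Complex.I * A + α⁻¹^2 * β^2 * (q:ℂ)^4 * (q:ℂ)⁻¹^4 * (x:ℂ)⁻¹^2 * S^2 * K^3 * B + (-1) * α⁻¹^2 * β^2 * (q:ℂ)^4 * (q:ℂ)⁻¹^4 * (x:ℂ)⁻¹^2 * S^2 * K^3 * A + α⁻¹^2 * β^2 * (q:ℂ)^5 * (q:ℂ)⁻¹^3 * (x:ℂ)⁻¹^2 * S^2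 * K^3 * C + (-1) * α⁻¹^2 * β^2 * (q:ℂ)^5 * (q:ℂ)⁻¹^3 * (x:ℂ)⁻¹^2 * S^2 * K^3 * A) * hqq +
    (A) * hKM +
    (α⁻¹^2 * β^2 * (q:ℂ)^4 * (q:ℂ)⁻¹^4 * (x:ℂ)⁻¹^2 * S^2 * K^3 * B + (-1) * α⁻¹^2 * β^2 * (q:ℂ)^4 * (q:ℂ)⁻¹^4 * (x:ℂ)⁻¹^2 * S^2 * K^3 * A + α⁻¹^2 * β^2 * (q:ℂ)^5 * (q:ℂ)⁻¹^3 * (x:ℂ)⁻¹^2 * S^2 * K^3 * C + (-1) * α⁻¹^2 * β^2 * (q:ℂ)^5 * (q:ℂ)⁻¹^3 * (x:ℂ)⁻¹^2 * S^2 * K^3 * A + (-1) * α⁻¹^2 * β^2 * (q:ℂ)^5 * (q:ℂ)⁻¹^5 * (x:ℂ)⁻¹^2 * S^2 * K^3 * B + α⁻¹^2 * β^2 * (q:ℂ)^5 * (q:ℂ)⁻¹^5 * (x:ℂ)⁻¹^2 * S^2 * K^3 * A + (-1) * α⁻¹^2 * β^2 * (q:ℂ)^6 * (q:ℂ)⁻¹^4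 * (x:ℂ)⁻¹^2 * S^2 * K^3 * C + α⁻¹^2 * β^2 * (q:ℂ)^6 * (q:ℂ)⁻¹^4 * (x:ℂ)⁻¹^2 * S^2 * K^3 * A) * hII
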